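/- Let G = (V,E) be a finite self-loopless directed graph, I ⊆ V, and let G' = (V, E') where E' = E \ {(x,i) : x ∈ V, i ∈ I} (remove all edges pointing into I). Then I fills V in G if and only if I fills V in G' and G' is acyclic. -/

import Mathlib

/-- Incoming vertices of `v` w.r.t. edge relation `E`. -/
def inSet {V : Type*} (E : V → V → Prop) (v : V) : Set V := {w | E w v}

/-- Vertices (completely) determined by `S`. -/
def Dtm {V : Type*} (E : V → V → Prop) (S : Set V) : Set V :=
  {v | (inSet E v).Nonempty ∧ inSet E v ⊆ S}

/-- Iterated determination closure. -/
def dcl {V : Type*} (E : V → V → Prop) (I : Set V) : ℕ → Set V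
  | 0 => I
  | n + 1 => dcl E I n ∪ Dtm E (dcl E I n)

/-- `I` fills the vertex set. -/
def Fills {V : Type*} (E : V → V → Prop) (I : Set V) : Prop :=
  ∃ n, dcl E I n = Set.univ

/-- `C` is (the vertex image of) a directed closed walk of positive length. -/
def IsCycle {V : Type*} (E : V → V → Prop) (C : Set V) : Prop :=
  ∃ (n : ℕ) (p : ℕ → V), 1 ≤ n ∧ p 0 = p n ∧ (∀ k < n, E (p k) (p (k + 1))) ∧
    C = p '' {k | k ≤ n}


/-!
Edges into `I` never matter for filling: a vertex of `I` is filled from the start, and the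
determination of any other vertex only looks at its in-edges, which are the same in both graphs.
Filling also forces acyclicity of `G'`: in a cycle of `G'` every vertex has an in-neighbour on the
cycle, and no vertex of the cycle lies in `I` (it has an in-edge of `G'`), so by induction no stage
of the closure ever reaches the cycle.
-/

section

variable {V : Type*}

theorem subset_dcl (E : V → V → Prop) (I : Set V) (n : ℕ) : I ⊆ dcl E I n := by
  induction n with
  | zero => exact le_rfl
  | succ n ih => exact ih.trans Set.subset_union_left

theorem dcl_congr {E E' : V → V → Prop} {I : Set V} (h : ∀ v ∉ I, inSet E v = inSet E' v)
    (n : ℕ) : dcl E I n = dcl E' I n := by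
  induction n with
  | zero => rfl
  | succ n ih =>
    show dcl E I n ∪ Dtm E (dcl E I n) = dcl E' I n ∪ Dtm E' (dcl E' I n)
    rw [← ih]
    ext v
    by_cases hv : v ∈ dcl E I n
    · simp [hv]
    · simp [Dtm, hv, h v fun hvI => hv (subset_dcl E I n hvI)]

theorem fills_congr {E E' : V → V → Prop} {I : Set V} (h : ∀ v ∉ I, inSet E v = inSet E' v) :
    Fills E I ↔ Fills E' I := by
  simp only [Fills, dcl_congr h]

theorem disjoint_dcl_of_forall_exists_pred {E : V → V → Prop} {I C : Set V}
    (hI : Disjoint C I) (hC : ∀ v ∈ C, ∃ w ∈ C, E w v) (n : ℕ) : Disjoint C (dcl E I n) := by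
  induction n with
  | zero => exact hI
  | succ n ih =>
    refine Set.disjoint_union_right.2 ⟨ih, Set.disjoint_left.2 fun v hvC hvD => ?_⟩
    obtain ⟨w, hwC, hwv⟩ := hC v hvC
    exact Set.disjoint_left.1 ih hwC (hvD.2 hwv)

theorem IsCycle.nonempty {E : V → V → Prop} {C : Set V} (hC : IsCycle E C) : C.Nonempty := by
  obtain ⟨n, p, -, -, -, rfl⟩ := hC
  exact ⟨p 0, 0, Nat.zero_le n, rfl⟩

theorem IsCycle.exists_pred_mem {E : V → V → Prop} {C : Set V} (hC : IsCycle E C) :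
    ∀ v ∈ C, ∃ w ∈ C, E w v := by
  obtain ⟨n, p, hn, hclosed, hedge, rfl⟩ := hC
  rintro _ ⟨k, hk : k ≤ n, rfl⟩
  -- the predecessor of `p 0` is `p (n - 1)`, since `p 0 = p n`
  obtain ⟨j, hj, hjk⟩ : ∃ j < n, p (j + 1) = p k := by
    rcases Nat.eq_zero_or_pos k with rfl | hpos
    · exact ⟨n - 1, by omega, by rw [Nat.sub_add_cancel hn, hclosed]⟩
    · exact ⟨k - 1, by omega, by rw [Nat.sub_add_cancel hpos]⟩
  exact ⟨p j, ⟨j, hj.le, rfl⟩, hjk ▸ hedge j hj⟩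

theorem IsCycle.not_fills {E : V → V → Prop} {I C : Set V} (hC : IsCycle E C)
    (hI : Disjoint C I) : ¬ Fills E I := by
  rintro ⟨n, hn⟩
  obtain ⟨v, hv⟩ := hC.nonempty
  exact Set.disjoint_left.1 (disjoint_dcl_of_forall_exists_pred hI hC.exists_pred_mem n) hv
    (hn ▸ Set.mem_univ v)

end

theorem dag_connection_general {V : Type*} (E : V → V → Prop) (I : Set V) :
    Fills E I ↔
      (Fills (fun x y => E x y ∧ y ∉ I) I ∧
        ¬ ∃ C : Set V, IsCycle (fun x y => E x y ∧ y ∉ I) C) := by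
  have hfills : Fills E I ↔ Fills (fun x y => E x y ∧ y ∉ I) I :=
    fills_congr fun v hv => by ext w; simp [inSet, hv]
  refine ⟨fun hF => ⟨hfills.1 hF, ?_⟩, fun h => hfills.2 h.1⟩
  rintro ⟨C, hC⟩
  have hCI : Disjoint C I := Set.disjoint_left.2 fun v hvC hvI => by
    obtain ⟨w, -, -, hv⟩ := hC.exists_pred_mem v hvC
    exact hv hvI
  exact hC.not_fills hCI (hfills.1 hF)

theorem dag_connection {V : Type*} [Fintype V] (E : V → V → Prop)
    (hloopless : ∀ v, ¬ E v v) (I : Set V) :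
    Fills E I ↔
      (Fills (fun x y => E x y ∧ y ∉ I) I ∧
        ¬ ∃ C : Set V, IsCycle (fun x y => E x y ∧ y ∉ I) C) :=
  dag_connection_general E I
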